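/- arXiv:2106.14242 — 3 statements merged into one kernel-verified Lean document; each statement's English description precedes it below -/
import Mathlib

section
/- Let d ≥ 1 and m ≥ 1 be integers and let δ ∈ (0,1]. Then there exists a constant C = C(d,m,δ) > 0 such that for every λ ∈ [δ, δ⁻¹] and every ξ ∈ ℝ^d with |ξ|^{2m} ∉ (3λ/4, 5λ/4), one has (1 + |ξ|²)^m ≤ C · | |ξ|^{2m} − λ |. -/
set_option maxHeartbeats 1000000 in
/-- Away from the resonant shell `{3λ/4 < |ξ|^{2m} < 5λ/4}`, the symbol
`(1+|ξ|²)^m` is dominated by `||ξ|^{2m} − λ|`, uniformly for `λ ∈ [δ, δ⁻¹]`. -/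
theorem nonresonant_symbol_bound (d m : ℕ) (hd : 1 ≤ d) (hm : 1 ≤ m)
    (δ : ℝ) (hδ : δ ∈ Set.Ioc (0 : ℝ) 1) :
    ∃ C : ℝ, 0 < C ∧
      ∀ lam ∈ Set.Icc δ δ⁻¹, ∀ ξ : EuclideanSpace ℝ (Fin d),
        ‖ξ‖ ^ (2 * m) ∉ Set.Ioo (3 * lam / 4) (5 * lam / 4) →
          (1 + ‖ξ‖ ^ 2) ^ m ≤ C * |‖ξ‖ ^ (2 * m) - lam| := by
  obtain ⟨hδ0, hδ1⟩ := hδ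
  refine ⟨(2 + 3/(4*δ))^m * (4/δ + 5), by positivity, ?_⟩
  intro lam hlam ξ hξ
  obtain ⟨hl1, hl2⟩ := hlam
  have hlam0 : 0 < lam := lt_of_lt_of_le hδ0 hl1
  have h5 : lam * δ ≤ 1 := by
    rw [← le_div_iff₀ hδ0, one_div]; exact hl2
  set t := ‖ξ‖^2 with ht
  have ht0 : 0 ≤ t := sq_nonneg _
  have hs : ‖ξ‖ ^ (2*m) = t ^ m := by rw [pow_mul]
  rw [hs] at hξ ⊢
  set s := t ^ m with hsdef
  have hs0 : 0 ≤ s := pow_nonneg ht0 m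
  have h3δ : 0 < 3/(4*δ) := by positivity
  have h4δ : 0 < 4/δ := by positivity
  have hA2 : (2:ℝ)^m ≤ (2 + 3/(4*δ))^m := pow_le_pow_left₀ (by norm_num) (by linarith) m
  have h2m : (1:ℝ) ≤ 2^m := one_le_pow₀ (by norm_num)
  have hfs : 4/δ * (δ/4) = 1 := by field_simp
  set A := (2 + 3/(4*δ))^m with hA
  have hA1 : (1:ℝ) ≤ A := le_trans h2m hA2
  have hApos : (0:ℝ) < A := by positivity
  rw [Set.mem_Ioo, not_and_or, not_lt, not_lt] at hξ
  rcases hξ with h | h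
  · -- s ≤ 3λ/4
    have hslam : s ≤ lam := by nlinarith
    have habs : |s - lam| = lam - s := by rw [abs_of_nonpos (by linarith)]; ring
    have hlb : δ/4 ≤ |s - lam| := by rw [habs]; linarith
    have htle : t ≤ 1 + 3/(4*δ) := by
      rcases le_or_gt t 1 with h1 | h1
      · linarith
      · have h2 : t ≤ s := le_self_pow₀ h1.le (by omega)
        have h4 : s ≤ 3/(4*δ) := by
          have h6 : 3*lam/4 ≤ 3/(4*δ) := by
            rw [div_le_div_iff₀ (by norm_num : (0:ℝ) < 4) (by positivity)]
            nlinarith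
          linarith
        linarith
    have hpow : (1+t)^m ≤ A := pow_le_pow_left₀ (by linarith) (by linarith) m
    have hkey : 4/δ * (δ/4) ≤ (4/δ + 5) * |s - lam| := by
      have h1 := mul_le_mul_of_nonneg_left hlb (le_of_lt h4δ)
      have h2 := abs_nonneg (s - lam)
      nlinarith
    calc (1+t)^m ≤ A := hpow
    _ = A * (4/δ * (δ/4)) := by rw [hfs, mul_one]
    _ ≤ A * ((4/δ + 5) * |s - lam|) := mul_le_mul_of_nonneg_left hkey hApos.le
    _ = A * (4/δ + 5) * |s - lam| := by ring
  · -- 5λ/4 ≤ s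
    have habs : |s - lam| = s - lam := by rw [abs_of_nonneg (by linarith)]
    have hlb : δ/4 ≤ |s - lam| := by rw [habs]; nlinarith
    have hlb2 : s/5 ≤ |s - lam| := by rw [habs]; nlinarith
    have hkey : 4/δ * (δ/4) ≤ (4/δ + 5) * |s - lam| := by
      have h1 := mul_le_mul_of_nonneg_left hlb (le_of_lt h4δ)
      have h2 := abs_nonneg (s - lam)
      nlinarith
    rcases le_or_gt t 1 with h1 | h1
    · have hpow : (1+t)^m ≤ A :=
        le_trans (pow_le_pow_left₀ (by linarith) (by linarith) m) hA2
      calc (1+t)^m ≤ A := hpow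
      _ = A * (4/δ * (δ/4)) := by rw [hfs, mul_one]
      _ ≤ A * ((4/δ + 5) * |s - lam|) := mul_le_mul_of_nonneg_left hkey hApos.le
      _ = A * (4/δ + 5) * |s - lam| := by ring
    · have hpow : (1+t)^m ≤ 2^m * s := by
        calc (1+t)^m ≤ (2*t)^m := pow_le_pow_left₀ (by linarith) (by linarith) m
        _ = 2^m * s := by rw [mul_pow]
      have hkey2 : 5 * (s/5) ≤ (4/δ + 5) * |s - lam| := by
        have h1 := mul_le_mul_of_nonneg_left hlb2 (by norm_num : (0:ℝ) ≤ 5)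
        have h2 := abs_nonneg (s - lam)
        nlinarith
      calc (1+t)^m ≤ 2^m * s := hpow
      _ ≤ A * s := mul_le_mul_of_nonneg_right hA2 hs0
      _ = A * (5 * (s/5)) := by ring
      _ ≤ A * ((4/δ + 5) * |s - lam|) := mul_le_mul_of_nonneg_left hkey2 hApos.le
      _ = A * (4/δ + 5) * |s - lam| := by ring
end

section
/- Let d ≥ 2 and identify ℝ^d = ℝ^{d−1} × ℝ, writing x = (x', x_d). For j ≥ 1 let D_j = {x ∈ ℝ^d : 2^{j−1} ≤ |x| ≤ 2^j} and D_0 = {x : |x| ≤ 1}. Then for every measurable f : ℝ^d → ℂ, ∫_ℝ ‖f(·, x_d)‖_{L²(ℝ^{d−1})} dx_d ≤ √2 · Σ_{j=0}^∞ 2^{j/2} ‖f‖_{L²(D_j)}. (That is, the Agmon–Hörmander space B embeds into L¹(ℝ; L²(ℝ^{d−1})) with constant √2.) -/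
open MeasureTheory
open scoped ENNReal

noncomputable section

/-- The Euclidean norm on `ℝ^d = ℝ^{d-1} × ℝ`. -/
def normE (d : ℕ) (x : EuclideanSpace ℝ (Fin (d - 1)) × ℝ) : ℝ :=
  Real.sqrt (‖x.1‖ ^ 2 + x.2 ^ 2)

/-- The dyadic pieces: `D_0 = {|x| ≤ 1}`, `D_j = {2^{j-1} ≤ |x| ≤ 2^j}` for `j ≥ 1`. -/
def Dset (d : ℕ) : ℕ → Set (EuclideanSpace ℝ (Fin (d - 1)) × ℝ)
  | 0 => {x | normE d x ≤ 1}
  | (j + 1) => {x | 2 ^ j ≤ normE d x ∧ normE d x ≤ 2 ^ (j + 1)}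

/-- A disjoint refinement of the dyadic pieces. -/
def Eset (d : ℕ) : ℕ → Set (EuclideanSpace ℝ (Fin (d - 1)) × ℝ)
  | 0 => {x | normE d x ≤ 1}
  | (j + 1) => {x | 2 ^ j < normE d x ∧ normE d x ≤ 2 ^ (j + 1)}

lemma continuous_normE (d : ℕ) : Continuous (normE d) :=
  Real.continuous_sqrt.comp ((continuous_fst.norm.pow 2).add (continuous_snd.pow 2))

lemma abs_snd_le_normE (d : ℕ) (x : EuclideanSpace ℝ (Fin (d - 1)) × ℝ) :
    |x.2| ≤ normE d x := by
  rw [← Real.sqrt_sq_eq_abs]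
  exact Real.sqrt_le_sqrt (le_add_of_nonneg_left (by positivity))

lemma measurableSet_Dset (d : ℕ) (j : ℕ) : MeasurableSet (Dset d j) := by
  cases j with
  | zero => exact (continuous_normE d).measurable measurableSet_Iic
  | succ j => exact (continuous_normE d).measurable measurableSet_Icc

lemma measurableSet_Eset (d : ℕ) (j : ℕ) : MeasurableSet (Eset d j) := by
  cases j with
  | zero => exact (continuous_normE d).measurable measurableSet_Iic
  | succ j => exact (continuous_normE d).measurable measurableSet_Ioc

lemma Eset_subset_Dset (d : ℕ) (j : ℕ) : Eset d j ⊆ Dset d j := by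
  cases j with
  | zero => exact fun x hx => hx
  | succ j => exact fun x hx => ⟨hx.1.le, hx.2⟩

lemma abs_snd_le_of_mem_Dset {d j : ℕ} {x : EuclideanSpace ℝ (Fin (d - 1)) × ℝ}
    (hx : x ∈ Dset d j) : |x.2| ≤ 2 ^ j := by
  refine (abs_snd_le_normE d x).trans ?_
  cases j with
  | zero => simpa [Dset] using hx
  | succ j => exact hx.2

lemma existsUnique_Eset (d : ℕ) (x : EuclideanSpace ℝ (Fin (d - 1)) × ℝ) :
    ∃! j : ℕ, x ∈ Eset d j := by
  set r := normE d x with hr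
  rcases le_or_gt r 1 with h | h
  · refine ⟨0, h, ?_⟩
    rintro (_ | j) hj
    · rfl
    · exact absurd ((one_le_pow₀ (by norm_num : (1:ℝ) ≤ 2)).trans_lt hj.1) (not_lt.2 h)
  · have hex : ∃ n : ℕ, r ≤ 2 ^ n := by
      obtain ⟨n, hn⟩ := pow_unbounded_of_one_lt r (y := (2:ℝ)) one_lt_two
      exact ⟨n, hn.le⟩
    have hn : r ≤ 2 ^ Nat.find hex := Nat.find_spec hex
    have hn0 : Nat.find hex ≠ 0 := by
      intro h0
      rw [h0] at hn
      simp only [pow_zero] at hn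
      linarith
    obtain ⟨m, hm⟩ : ∃ m, Nat.find hex = m + 1 :=
      ⟨Nat.find hex - 1, (Nat.succ_pred_eq_of_pos (Nat.pos_of_ne_zero hn0)).symm⟩
    have hmlt : (2:ℝ) ^ m < r := lt_of_not_ge (Nat.find_min hex (by omega))
    refine ⟨m + 1, ⟨hmlt, hm ▸ hn⟩, ?_⟩
    rintro (_ | i) hi
    · exact absurd hi (not_le.2 ((one_le_pow₀ (by norm_num : (1:ℝ) ≤ 2)).trans_lt hmlt))
    · rcases lt_trichotomy i m with hlt | he | hgt
      · exact absurd (hi.2.trans (pow_le_pow_right₀ one_le_two hlt)) (not_le.2 hmlt)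
      · rw [he]
      · exact absurd ((hm ▸ hn).trans (pow_le_pow_right₀ one_le_two hgt)) (not_le.2 hi.1)

/-- `(∑ aⱼ)^{1/2} ≤ ∑ aⱼ^{1/2}` in `ℝ≥0∞`. -/
lemma tsum_rpow_half_le (a : ℕ → ℝ≥0∞) :
    (∑' j, a j) ^ (1/2 : ℝ) ≤ ∑' j, a j ^ (1/2 : ℝ) := by
  set T := ∑' j, a j ^ (1/2 : ℝ) with hT
  have h1 : ∑' j, a j ≤ T ^ (2:ℝ) := by
    have hle : ∀ j, a j ≤ a j ^ (1/2:ℝ) * T := by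
      intro j
      calc a j = a j ^ (1/2:ℝ) * a j ^ (1/2:ℝ) := by
            rw [← ENNReal.rpow_add_of_nonneg _ _ (by norm_num) (by norm_num)]
            norm_num
        _ ≤ a j ^ (1/2:ℝ) * T := by
            gcongr
            exact ENNReal.le_tsum j
    calc ∑' j, a j ≤ ∑' j, a j ^ (1/2:ℝ) * T := ENNReal.tsum_le_tsum hle
      _ = T * T := by rw [ENNReal.tsum_mul_right]
      _ = T ^ (2:ℝ) := by
          rw [show (2:ℝ) = ((2:ℕ):ℝ) by norm_num, ENNReal.rpow_natCast, sq]
  calc (∑' j, a j) ^ (1/2:ℝ) ≤ (T ^ (2:ℝ)) ^ (1/2:ℝ) :=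
        ENNReal.rpow_le_rpow h1 (by norm_num)
    _ = T := by rw [← ENNReal.rpow_mul]; norm_num

/-- The Agmon–Hörmander space `B` embeds into `L¹(ℝ; L²(ℝ^{d-1}))` with constant `√2`. -/
theorem B_embeds_in_L1L2 (d : ℕ) (hd : 2 ≤ d)
    (f : EuclideanSpace ℝ (Fin (d - 1)) × ℝ → ℂ) (hf : Measurable f) :
    ∫⁻ xd : ℝ, eLpNorm (fun x' => f (x', xd)) 2 (volume : Measure (EuclideanSpace ℝ (Fin (d - 1)))) ≤
      ENNReal.ofReal (Real.sqrt 2) *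
        ∑' j : ℕ, ENNReal.ofReal ((2 : ℝ) ^ ((j : ℝ) / 2)) *
          eLpNorm f 2 (volume.restrict (Dset d j)) := by
  set g : EuclideanSpace ℝ (Fin (d - 1)) × ℝ → ℝ≥0∞ :=
    fun x => (‖f x‖₊ : ℝ≥0∞) ^ (2:ℝ) with hgdef
  have hg : Measurable g :=
    (ENNReal.continuous_rpow_const.measurable).comp hf.enorm
  have hgE : ∀ j, Measurable ((Eset d j).indicator g) :=
    fun j => hg.indicator (measurableSet_Eset d j)
  have hgD : ∀ j, Measurable ((Dset d j).indicator g) :=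
    fun j => hg.indicator (measurableSet_Dset d j)
  -- pointwise decomposition of g
  have hcover : ∀ x, ∑' j, (Eset d j).indicator g x = g x := by
    intro x
    obtain ⟨j0, hj0, huniq⟩ := existsUnique_Eset d x
    rw [tsum_eq_single j0 (fun b hb =>
      Set.indicator_of_notMem (fun hxb => hb (huniq b hxb)) g)]
    exact Set.indicator_of_mem hj0 g
  -- Step 1: slicewise bound
  have step1 : ∀ xd : ℝ,
      eLpNorm (fun x' => f (x', xd)) 2 (volume : Measure (EuclideanSpace ℝ (Fin (d - 1)))) ≤
      ∑' j, (∫⁻ x', (Eset d j).indicator g (x', xd)) ^ (1/2:ℝ) := by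
    intro xd
    rw [eLpNorm_eq_lintegral_rpow_enorm_toReal (by norm_num) (by norm_num)]
    have h2 : (2:ℝ≥0∞).toReal = (2:ℝ) := by norm_num
    rw [h2]
    have heq : ∫⁻ x', (‖f (x', xd)‖₊ : ℝ≥0∞) ^ (2:ℝ) =
        ∑' j, ∫⁻ x', (Eset d j).indicator g (x', xd) := by
      have hswap := lintegral_tsum (μ := (volume : Measure (EuclideanSpace ℝ (Fin (d - 1)))))
        (f := fun j x' => (Eset d j).indicator g (x', xd))
        (fun j => ((hgE j).comp (measurable_prodMk_right)).aemeasurable)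
      rw [← hswap]
      congr 1
      ext x'
      exact (hcover (x', xd)).symm
    simp only [enorm_eq_nnnorm]
    rw [heq]
    exact tsum_rpow_half_le _
  -- Step 2: per-piece bound
  have step2 : ∀ j : ℕ,
      ∫⁻ xd : ℝ, (∫⁻ x', (Eset d j).indicator g (x', xd)) ^ (1/2:ℝ) ≤
      ENNReal.ofReal (Real.sqrt 2) *
        (ENNReal.ofReal ((2 : ℝ) ^ ((j : ℝ) / 2)) *
          eLpNorm f 2 (volume.restrict (Dset d j))) := by
    intro j
    set B : ℝ → ℝ≥0∞ := fun xd => ∫⁻ x', (Dset d j).indicator g (x', xd) with hBdef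
    have hBmeas : Measurable B := (hgD j).lintegral_prod_left'
    have hABle : ∀ xd, (∫⁻ x', (Eset d j).indicator g (x', xd)) ≤ B xd := by
      intro xd
      refine lintegral_mono fun x' => ?_
      exact Set.indicator_le_indicator_of_subset (Eset_subset_Dset d j)
        (fun _ => zero_le) _
    set I : Set ℝ := Set.Icc (-(2:ℝ)^j) ((2:ℝ)^j) with hIdef
    have hsupp : ∀ xd : ℝ, xd ∉ I → B xd = 0 := by
      intro xd hxd
      have : ∀ x', (Dset d j).indicator g (x', xd) = 0 := by
        intro x'
        apply Set.indicator_of_notMem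
        intro hmem
        apply hxd
        have := abs_snd_le_of_mem_Dset hmem
        simp only [hIdef, Set.mem_Icc]
        constructor <;> [linarith [neg_abs_le xd]; linarith [le_abs_self xd]]
      simp only [hBdef, this, lintegral_zero]
    -- restrict the integral to I
    have hres : ∫⁻ xd : ℝ, B xd ^ (1/2:ℝ) = ∫⁻ xd in I, B xd ^ (1/2:ℝ) := by
      rw [← lintegral_indicator measurableSet_Icc (fun xd => B xd ^ (1/2:ℝ))]
      congr 1
      ext xd
      by_cases hxd : xd ∈ I
      · rw [Set.indicator_of_mem hxd]
      · rw [Set.indicator_of_notMem hxd, hsupp xd hxd,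
          ENNReal.zero_rpow_of_pos (by norm_num)]
    -- Cauchy-Schwarz on I
    have hconj : Real.HolderConjugate 2 2 := by constructor <;> norm_num
    have hCS := ENNReal.lintegral_mul_le_Lp_mul_Lq (volume.restrict I) hconj
      (f := fun xd => B xd ^ (1/2:ℝ)) (g := fun _ => (1:ℝ≥0∞))
      ((((ENNReal.continuous_rpow_const (y := (1/2:ℝ))).measurable).comp hBmeas).aemeasurable)
      aemeasurable_const
    simp only [Pi.mul_apply, mul_one] at hCS
    have hpow2 : ∀ xd, (B xd ^ (1/2:ℝ)) ^ (2:ℝ) = B xd := by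
      intro xd; rw [← ENNReal.rpow_mul]; norm_num
    have hone : (∫⁻ _ in I, (1:ℝ≥0∞) ^ (2:ℝ)) = volume I := by
      simp [setLIntegral_one]
    -- the middle bound
    have hBint : ∫⁻ xd in I, B xd ≤ ∫⁻ xd, B xd := setLIntegral_le_lintegral _ _
    have hBtot : ∫⁻ xd : ℝ, B xd = ∫⁻ x in Dset d j, g x := by
      rw [← lintegral_indicator (measurableSet_Dset d j) g, Measure.volume_eq_prod,
        lintegral_prod_symm' _ (hgD j)]
    have help : eLpNorm f 2 (volume.restrict (Dset d j)) =
        (∫⁻ x in Dset d j, g x) ^ (1/2:ℝ) := by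
      rw [eLpNorm_eq_lintegral_rpow_enorm_toReal (by norm_num) (by norm_num)]
      norm_num [hgdef, enorm_eq_nnnorm]
    have hvol : volume I = ENNReal.ofReal (2 * 2 ^ j) := by
      rw [hIdef, Real.volume_Icc]
      congr 1
      ring
    have hconst : (volume I) ^ (1/2:ℝ) =
        ENNReal.ofReal (Real.sqrt 2) * ENNReal.ofReal ((2:ℝ) ^ ((j:ℝ)/2)) := by
      rw [hvol, ENNReal.ofReal_rpow_of_pos (by positivity)]
      rw [Real.mul_rpow (by norm_num) (by positivity)]
      rw [ENNReal.ofReal_mul (by positivity)]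
      congr 2
      · rw [← Real.sqrt_eq_rpow]
      · rw [← Real.rpow_natCast (2:ℝ) j, ← Real.rpow_mul (by norm_num)]
        congr 1
        ring
    calc ∫⁻ xd : ℝ, (∫⁻ x', (Eset d j).indicator g (x', xd)) ^ (1/2:ℝ)
        ≤ ∫⁻ xd : ℝ, B xd ^ (1/2:ℝ) := by
          refine lintegral_mono fun xd => ?_
          exact ENNReal.rpow_le_rpow (hABle xd) (by norm_num)
      _ = ∫⁻ xd in I, B xd ^ (1/2:ℝ) := hres
      _ ≤ (∫⁻ xd in I, (B xd ^ (1/2:ℝ)) ^ (2:ℝ)) ^ (1/(2:ℝ)) *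
            (∫⁻ _ in I, (1:ℝ≥0∞) ^ (2:ℝ)) ^ (1/(2:ℝ)) := hCS
      _ = (∫⁻ xd in I, B xd) ^ (1/(2:ℝ)) * (volume I) ^ (1/(2:ℝ)) := by
          rw [hone]
          congr 1
          congr 1
          exact lintegral_congr fun xd => hpow2 xd
      _ ≤ (∫⁻ xd : ℝ, B xd) ^ (1/(2:ℝ)) * (volume I) ^ (1/(2:ℝ)) := by
          gcongr
      _ = ENNReal.ofReal (Real.sqrt 2) *
            (ENNReal.ofReal ((2 : ℝ) ^ ((j : ℝ) / 2)) *
              eLpNorm f 2 (volume.restrict (Dset d j))) := by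
          rw [hBtot, help, hconst]
          ring
  -- assemble
  calc ∫⁻ xd : ℝ, eLpNorm (fun x' => f (x', xd)) 2
        (volume : Measure (EuclideanSpace ℝ (Fin (d - 1))))
      ≤ ∫⁻ xd : ℝ, ∑' j, (∫⁻ x', (Eset d j).indicator g (x', xd)) ^ (1/2:ℝ) :=
        lintegral_mono step1
    _ = ∑' j : ℕ, ∫⁻ xd : ℝ, (∫⁻ x', (Eset d j).indicator g (x', xd)) ^ (1/2:ℝ) := by
        refine lintegral_tsum fun j => ?_
        exact ((ENNReal.continuous_rpow_const.measurable).comp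
          ((hgE j).lintegral_prod_left')).aemeasurable
    _ ≤ ∑' j : ℕ, ENNReal.ofReal (Real.sqrt 2) *
          (ENNReal.ofReal ((2 : ℝ) ^ ((j : ℝ) / 2)) *
            eLpNorm f 2 (volume.restrict (Dset d j))) :=
        ENNReal.tsum_le_tsum step2
    _ = ENNReal.ofReal (Real.sqrt 2) *
          ∑' j : ℕ, ENNReal.ofReal ((2 : ℝ) ^ ((j : ℝ) / 2)) *
            eLpNorm f 2 (volume.restrict (Dset d j)) :=
        ENNReal.tsum_mul_left
end
end

section
/- Let d ≥ 1, let N ≥ 0 be a real number, and for γ ∈ (0,1] define the weight μ_{N,γ}(t) = ((1+t²)/(1+γt²))^N for t ≥ 0. Let ξ_1, …, ξ_d be unit vectors in ℝ^d forming a basis of ℝ^d. Then there exists a constant C > 0 (depending on N, d and the basis, but not on γ) such that for every γ ∈ (0,1] and every x ∈ ℝ^d: C^{−1} · μ_{N,γ}(|x|) ≤ Σ_{j=1}^d μ_{N,γ}(|⟨x, ξ_j⟩|) ≤ C · μ_{N,γ}(|x|). -/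
noncomputable section

/-- The weight `μ_{N,γ}(t) = ((1+t²)/(1+γt²))^N`. -/
def muWeight (N γ t : ℝ) : ℝ := ((1 + t ^ 2) / (1 + γ * t ^ 2)) ^ N

lemma muBase_pos {γ t : ℝ} (hγ : 0 < γ) : 0 < (1 + t ^ 2) / (1 + γ * t ^ 2) := by
  apply div_pos <;> positivity

lemma muWeight_mono {N γ : ℝ} (hN : 0 ≤ N) (hγ : 0 < γ) (hγ1 : γ ≤ 1) {s t : ℝ}
    (hs : 0 ≤ s) (hst : s ≤ t) : muWeight N γ s ≤ muWeight N γ t := by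
  apply Real.rpow_le_rpow (muBase_pos hγ).le _ hN
  rw [div_le_div_iff₀ (by positivity) (by positivity)]
  have h1 : s ^ 2 ≤ t ^ 2 := by nlinarith
  nlinarith [mul_nonneg (sub_nonneg.2 h1) (sub_nonneg.2 hγ1)]

lemma muWeight_scale {N γ s K : ℝ} (hN : 0 ≤ N) (hγ : 0 < γ) (hK : 1 ≤ K) (hs : 0 ≤ s) :
    muWeight N γ (K * s) ≤ (K ^ 2) ^ N * muWeight N γ s := by
  have hK0 : 0 < K := lt_of_lt_of_le one_pos hK
  have hbase : (1 + (K * s) ^ 2) / (1 + γ * (K * s) ^ 2)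
      ≤ K ^ 2 * ((1 + s ^ 2) / (1 + γ * s ^ 2)) := by
    rw [← mul_div_assoc, div_le_div_iff₀ (by positivity) (by positivity)]
    have h1 : (1:ℝ) ≤ K ^ 2 := by nlinarith
    have h2 : K ^ 2 ≤ K ^ 4 := by nlinarith
    have h4 : (1:ℝ) ≤ K ^ 4 := h1.trans h2
    nlinarith [mul_nonneg (mul_nonneg hγ.le (sq_nonneg s)) (sub_nonneg.2 h4),
      mul_nonneg (mul_nonneg (mul_nonneg hγ.le (sq_nonneg s)) (sq_nonneg s)) (sub_nonneg.2 h2)]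
  calc muWeight N γ (K * s) ≤ (K ^ 2 * ((1 + s ^ 2) / (1 + γ * s ^ 2))) ^ N :=
        Real.rpow_le_rpow (muBase_pos hγ).le hbase hN
    _ = (K ^ 2) ^ N * muWeight N γ s := by
        rw [Real.mul_rpow (by positivity) (muBase_pos hγ).le]; rfl

lemma muWeight_nonneg {N γ t : ℝ} (hγ : 0 < γ) : 0 ≤ muWeight N γ t :=
  Real.rpow_nonneg (muBase_pos hγ).le N

/-- Comparability of the weight `μ_{N,γ}(|x|)` with `Σ_j μ_{N,γ}(|⟨x,ξ_j⟩|)` for a basis of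
unit vectors `ξ_1, …, ξ_d`, uniformly in `γ ∈ (0,1]`. -/
theorem muWeight_comparable_along_basis (d : ℕ) (hd : 1 ≤ d) (N : ℝ) (hN : 0 ≤ N)
    (b : Module.Basis (Fin d) ℝ (EuclideanSpace ℝ (Fin d))) (hb : ∀ j, ‖b j‖ = 1) :
    ∃ C : ℝ, 0 < C ∧
      ∀ γ ∈ Set.Ioc (0 : ℝ) 1, ∀ x : EuclideanSpace ℝ (Fin d),
        C⁻¹ * muWeight N γ ‖x‖ ≤ ∑ j : Fin d, muWeight N γ |(inner ℝ x (b j) : ℝ)| ∧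
        ∑ j : Fin d, muWeight N γ |(inner ℝ x (b j) : ℝ)| ≤ C * muWeight N γ ‖x‖ := by
  classical
  set T : EuclideanSpace ℝ (Fin d) →ₗ[ℝ] (Fin d → ℝ) :=
    LinearMap.pi (fun j => (innerSL ℝ (b j)).toLinearMap) with hTdef
  have hTapp : ∀ (x : EuclideanSpace ℝ (Fin d)) (j : Fin d), T x j = inner ℝ (b j) x :=
    fun x j => rfl
  have hinj : Function.Injective T := by
    rw [← LinearMap.ker_eq_bot, LinearMap.ker_eq_bot']
    intro x hx
    have h0 : ∀ j, (inner ℝ (b j) x : ℝ) = 0 := by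
      intro j; have := congrFun hx j; simpa [hTapp] using this
    have hx0 : (inner ℝ x x : ℝ) = 0 := by
      calc (inner ℝ x x : ℝ) = inner ℝ (∑ j, b.repr x j • b j) x := by rw [b.sum_repr x]
        _ = 0 := by rw [sum_inner]; simp only [real_inner_smul_left, h0, mul_zero, Finset.sum_const_zero]
    exact inner_self_eq_zero.1 hx0
  have hrank : Module.finrank ℝ (EuclideanSpace ℝ (Fin d))
      = Module.finrank ℝ (Fin d → ℝ) := by simp
  let e : EuclideanSpace ℝ (Fin d) ≃ₗ[ℝ] (Fin d → ℝ) :=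
    LinearEquiv.ofInjective T hinj ≪≫ₗ
      (LinearEquiv.ofEq _ ⊤ (LinearMap.range_eq_top.2
        ((LinearMap.injective_iff_surjective_of_finrank_eq_finrank hrank).1 hinj)) ≪≫ₗ
        Submodule.topEquiv)
  have heapp : ∀ x, e x = T x := fun x => rfl
  let E := e.toContinuousLinearEquiv
  have hEapp : ∀ x, E x = T x := fun x => rfl
  set K : ℝ := ‖(E.symm : (Fin d → ℝ) →L[ℝ] EuclideanSpace ℝ (Fin d))‖ + 1 with hKdef
  have hK1 : (1:ℝ) ≤ K := by
    have := norm_nonneg (E.symm : (Fin d → ℝ) →L[ℝ] EuclideanSpace ℝ (Fin d)); linarith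
  have hK0 : (0:ℝ) < K := lt_of_lt_of_le one_pos hK1
  have key : ∀ x : EuclideanSpace ℝ (Fin d), ∃ j, ‖x‖ ≤ K * |(inner ℝ x (b j) : ℝ)| := by
    intro x
    obtain ⟨j, -, hj⟩ := Finset.exists_max_image Finset.univ
      (fun j => |(inner ℝ x (b j) : ℝ)|) ⟨⟨0, hd⟩, Finset.mem_univ _⟩
    refine ⟨j, ?_⟩
    have h1 : ‖E x‖ ≤ |(inner ℝ x (b j) : ℝ)| := by
      rw [pi_norm_le_iff_of_nonneg (abs_nonneg _)]
      intro i
      have : E x i = (inner ℝ (b i) x : ℝ) := by rw [hEapp, hTapp]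
      rw [Real.norm_eq_abs, this, real_inner_comm]
      exact hj i (Finset.mem_univ _)
    have h2 : ‖x‖ ≤ ‖(E.symm : (Fin d → ℝ) →L[ℝ] EuclideanSpace ℝ (Fin d))‖ * ‖E x‖ := by
      calc ‖x‖ = ‖E.symm (E x)‖ := by rw [E.symm_apply_apply]
        _ ≤ _ := (E.symm : (Fin d → ℝ) →L[ℝ] EuclideanSpace ℝ (Fin d)).le_opNorm _
    calc ‖x‖ ≤ ‖(E.symm : (Fin d → ℝ) →L[ℝ] EuclideanSpace ℝ (Fin d))‖ * |(inner ℝ x (b j) : ℝ)| :=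
          h2.trans (mul_le_mul_of_nonneg_left h1 (norm_nonneg _))
      _ ≤ K * |(inner ℝ x (b j) : ℝ)| := by
          apply mul_le_mul_of_nonneg_right _ (abs_nonneg _)
          rw [hKdef]; linarith
  have hKN1 : (1:ℝ) ≤ (K ^ 2) ^ N := by
    rw [← Real.one_rpow N]
    exact Real.rpow_le_rpow zero_le_one (by nlinarith) hN
  have hKN0 : (0:ℝ) < (K ^ 2) ^ N := lt_of_lt_of_le one_pos hKN1
  refine ⟨d * (K ^ 2) ^ N, by positivity, ?_⟩
  rintro γ ⟨hγ, hγ1⟩ x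
  have hμn : 0 ≤ muWeight N γ ‖x‖ := muWeight_nonneg hγ
  have hsum_nonneg : 0 ≤ ∑ j : Fin d, muWeight N γ |(inner ℝ x (b j) : ℝ)| :=
    Finset.sum_nonneg fun j _ => muWeight_nonneg hγ
  constructor
  · rw [inv_mul_le_iff₀ (by positivity)]
    obtain ⟨j, hj⟩ := key x
    have h1 : muWeight N γ ‖x‖ ≤ (K ^ 2) ^ N * muWeight N γ |(inner ℝ x (b j) : ℝ)| := by
      calc muWeight N γ ‖x‖ ≤ muWeight N γ (K * |(inner ℝ x (b j) : ℝ)|) :=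
            muWeight_mono hN hγ hγ1 (norm_nonneg x) hj
        _ ≤ _ := muWeight_scale hN hγ hK1 (abs_nonneg _)
    have h2 : muWeight N γ |(inner ℝ x (b j) : ℝ)|
        ≤ ∑ i : Fin d, muWeight N γ |(inner ℝ x (b i) : ℝ)| :=
      Finset.single_le_sum (f := fun i => muWeight N γ |(inner ℝ x (b i) : ℝ)|)
        (fun i _ => muWeight_nonneg hγ) (Finset.mem_univ j)
    have hd1 : (1:ℝ) ≤ d := by exact_mod_cast hd
    calc muWeight N γ ‖x‖ ≤ (K ^ 2) ^ N * ∑ i : Fin d, muWeight N γ |(inner ℝ x (b i) : ℝ)| :=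
          h1.trans (mul_le_mul_of_nonneg_left h2 hKN0.le)
      _ ≤ d * (K ^ 2) ^ N * ∑ i : Fin d, muWeight N γ |(inner ℝ x (b i) : ℝ)| := by
          apply mul_le_mul_of_nonneg_right _ hsum_nonneg
          nlinarith
  · have h1 : ∀ j : Fin d, muWeight N γ |(inner ℝ x (b j) : ℝ)| ≤ muWeight N γ ‖x‖ := by
      intro j
      apply muWeight_mono hN hγ hγ1 (abs_nonneg _)
      calc |(inner ℝ x (b j) : ℝ)| ≤ ‖x‖ * ‖b j‖ := abs_real_inner_le_norm x (b j)
        _ = ‖x‖ := by rw [hb j, mul_one]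
    calc ∑ j : Fin d, muWeight N γ |(inner ℝ x (b j) : ℝ)|
        ≤ ∑ _j : Fin d, muWeight N γ ‖x‖ := Finset.sum_le_sum (fun j _ => h1 j)
      _ = d * muWeight N γ ‖x‖ := by
          simp [Finset.sum_const, nsmul_eq_mul]
      _ ≤ d * (K ^ 2) ^ N * muWeight N γ ‖x‖ := by
          apply mul_le_mul_of_nonneg_right _ hμn
          have hd0 : (0:ℝ) ≤ d := Nat.cast_nonneg d
          nlinarith
end
end
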